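/- In the group G = ⟨c⟩_7 ⋊ ⟨a⟩_6 with c^a = c^5 (cyclic group of order 7 extended by an order-6 automorphism), one has a^6 = 1 ∈ G', c ∈ G', and c · c^a · (c^{a^3})^{-1} · (c^{a^4})^{-1} ≠ 1; consequently the unimodular equation x (x^a)^{-1} x^{a^2} = c over G has no solution in any metabelian group. -/

import Mathlib

lemma zmod7_pow7 (x : Multiplicative (ZMod 7)) : x ^ 7 = 1 := by
  have : x ^ Fintype.card (Multiplicative (ZMod 7)) = 1 := pow_card_eq_one
  simpa using this

/-- The automorphism `c ↦ c⁵` of the cyclic group of order 7. -/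
def aut5 : MulAut (Multiplicative (ZMod 7)) where
  toFun x := x ^ 5
  invFun x := x ^ 3
  left_inv := by
    intro x
    show (x ^ 5) ^ 3 = x
    rw [← pow_mul, show (5 * 3 : ℕ) = 7 * 2 + 1 from rfl, pow_add, pow_mul,
      zmod7_pow7, one_pow, one_mul, pow_one]
  right_inv := by
    intro x
    show (x ^ 3) ^ 5 = x
    rw [← pow_mul, show (3 * 5 : ℕ) = 7 * 2 + 1 from rfl, pow_add, pow_mul,
      zmod7_pow7, one_pow, one_mul, pow_one]
  map_mul' := fun x y => mul_pow x y 5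

lemma aut5_pow (k : ℕ) : ∀ x : Multiplicative (ZMod 7), (aut5 ^ k) x = x ^ 5 ^ k := by
  induction k with
  | zero => intro x; simp
  | succ m ih =>
    intro x
    have h : (aut5 ^ (m + 1)) x = (aut5 ^ m) (x ^ 5) := by rw [pow_succ]; rfl
    rw [h, ih (x ^ 5), ← pow_mul, pow_succ, mul_comm]

lemma aut5_pow_six : aut5 ^ 6 = 1 := by
  refine MulEquiv.ext fun x => ?_
  rw [aut5_pow 6 x]
  show _ = x
  rw [show (5 ^ 6 : ℕ) = 7 * 2232 + 1 from rfl, pow_add, pow_mul, zmod7_pow7,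
    one_pow, one_mul, pow_one]

/-- The action of `⟨a⟩₆ = ZMod 6` on `⟨c⟩₇` sending `a` to `c ↦ c⁵`. -/
def phi57 : Multiplicative (ZMod 6) →* MulAut (Multiplicative (ZMod 7)) where
  toFun k := aut5 ^ (k.toAdd.val)
  map_one' := by simp [ZMod.val]; exact pow_zero _
  map_mul' := by
    intro x y
    show aut5 ^ ((x.toAdd + y.toAdd).val) = aut5 ^ x.toAdd.val * aut5 ^ y.toAdd.val
    rw [← pow_add]
    have h : ((x.toAdd + y.toAdd).val : ZMod 6) = ((x.toAdd.val + y.toAdd.val : ℕ) : ZMod 6) := by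
      simp [ZMod.natCast_val]
    have hmod := (ZMod.natCast_eq_natCast_iff _ _ _).mp h
    have key : ∀ p q : ℕ, p ≡ q [MOD 6] → aut5 ^ p = aut5 ^ q := by
      intro p q hpq
      rw [Nat.ModEq] at hpq
      calc aut5 ^ p = aut5 ^ (p % 6 + 6 * (p / 6)) := by rw [Nat.mod_add_div]
        _ = aut5 ^ (p % 6) := by rw [pow_add, pow_mul, aut5_pow_six, one_pow, mul_one]
        _ = aut5 ^ (q % 6) := by rw [hpq]
        _ = aut5 ^ (q % 6 + 6 * (q / 6)) := by
            rw [pow_add, pow_mul, aut5_pow_six, one_pow, mul_one]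
        _ = aut5 ^ q := by rw [Nat.mod_add_div]
    exact key _ _ hmod

/-- The group `⟨c⟩₇ ⋊ ⟨a⟩₆ `with `cᵃ = c⁵`. -/
abbrev G42 := SemidirectProduct (Multiplicative (ZMod 7)) (Multiplicative (ZMod 6)) phi57

/-- `a` is the generator of `⟨a⟩₆`, `c` the generator of `⟨c⟩₇`. -/
def a42 : G42 := SemidirectProduct.inr (Multiplicative.ofAdd (1 : ZMod 6))
def c42 : G42 := SemidirectProduct.inl (Multiplicative.ofAdd (1 : ZMod 7))

/-!
Modulo the derived subgroup the equation reads `x = c`, so a solution `x` lies in `H'`, which is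
abelian when `H` is metabelian. Writing `H'` additively with `yᵢ = x^(aⁱ)`, `cᵢ = c^(aⁱ)`,
conjugating the equation by `aⁱ` gives `cᵢ = yᵢ - yᵢ₊₁ + yᵢ₊₂`, with indices mod 6 since
`a⁶ = 1`; hence `c₀ + c₁ - c₃ - c₄` telescopes to `0`. In `G` this combination is not trivial,
so the equation has no solution in a metabelian overgroup.
-/

open Subgroup
open scoped commutatorElement IsMulCommutative

lemma mul_mul_inv_mul_inv_eq_one_of_periodic {M : Type*} [CommGroup M] (y c : ℕ → M)
    (hy : y 6 = y 0) (hc : ∀ i, c i = y i * (y (i + 1))⁻¹ * y (i + 2)) :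
    c 0 * c 1 * (c 3)⁻¹ * (c 4)⁻¹ = 1 := by
  simp only [hc, hy]
  simp [mul_comm, mul_assoc, mul_left_comm]

lemma isMulCommutative_commutator_of_derivedSeries_two_eq_bot {G : Type*} [Group G]
    (hG : derivedSeries G 2 = ⊥) : IsMulCommutative (commutator G) := by
  rwa [derivedSeries_succ, derivedSeries_one, commutator_self_eq_bot_iff] at hG

lemma mem_commutator_of_mul_inv_conj_mul_conj_eq {G : Type*} [Group G] {a c x : G}
    (hc : c ∈ commutator G) (hx : x * (a⁻¹ * x * a)⁻¹ * ((a ^ 2)⁻¹ * x * a ^ 2) = c) :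
    x ∈ commutator G := by
  have hx_ab : Abelianization.of x = Abelianization.of c := by
    rw [← hx]
    simp [mul_comm, mul_assoc]
  have hxc : x * c⁻¹ ∈ commutator G := by
    rw [← Abelianization.ker_of, MonoidHom.mem_ker, map_mul, map_inv, hx_ab, mul_inv_cancel]
  simpa using mul_mem hxc hc

lemma mul_conj_mul_inv_conj_mul_inv_conj_eq_one {G : Type*} [Group G]
    (hG : derivedSeries G 2 = ⊥) {a c x : G} (ha : a ^ 6 = 1) (hc : c ∈ commutator G)
    (hx : x * (a⁻¹ * x * a)⁻¹ * ((a ^ 2)⁻¹ * x * a ^ 2) = c) :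
    c * (a⁻¹ * c * a) * ((a ^ 3)⁻¹ * c * a ^ 3)⁻¹ * ((a ^ 4)⁻¹ * c * a ^ 4)⁻¹ = 1 := by
  have := isMulCommutative_commutator_of_derivedSeries_two_eq_bot hG
  have hxG := mem_commutator_of_mul_inv_conj_mul_conj_eq hc hx
  let y (i : ℕ) : commutator G := ⟨(a ^ i)⁻¹ * x * a ^ i, (commutator_normal _ _).conj_mem' _ hxG _⟩
  let c' (i : ℕ) : commutator G := ⟨(a ^ i)⁻¹ * c * a ^ i, (commutator_normal _ _).conj_mem' _ hc _⟩
  have hy : y 6 = y 0 := Subtype.ext (by simp [y, ha])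
  have hc' (i : ℕ) : c' i = y i * (y (i + 1))⁻¹ * y (i + 2) :=
    Subtype.ext (by simp only [c', y, coe_mul, coe_inv, ← hx]; group)
  simpa [c'] using congrArg Subtype.val (mul_mul_inv_mul_inv_eq_one_of_periodic y c' hy hc')

lemma a42_pow_six : a42 ^ 6 = 1 := by decide

lemma c42_eq_commutatorElement_sq : c42 = ⁅a42, c42⁆ ^ 2 := by decide

lemma c42_mem_commutator : c42 ∈ commutator G42 :=
  c42_eq_commutatorElement_sq ▸ pow_mem (commutator_mem_commutator (mem_top _) (mem_top _)) 2

lemma c42_relation_ne_one : c42 * (a42⁻¹ * c42 * a42) * ((a42 ^ 3)⁻¹ * c42 * a42 ^ 3)⁻¹ *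
      ((a42 ^ 4)⁻¹ * c42 * a42 ^ 4)⁻¹ ≠ 1 := by decide

/-- In `G = ⟨c⟩₇ ⋊ ⟨a⟩₆` with `cᵃ = c⁵` one has `a⁶ = 1 ∈ G'`, `c ∈ G'`, and
`c · cᵃ · (c^(a³))⁻¹ · (c^(a⁴))⁻¹ ≠ 1`; consequently the unimodular equation
`x (xᵃ)⁻¹ x^(a²) = c` over `G` has no solution in any metabelian group. -/
theorem stmt_10 :
    a42 ^ 6 = 1 ∧ a42 ^ 6 ∈ commutator G42 ∧ c42 ∈ commutator G42 ∧
    c42 * (a42⁻¹ * c42 * a42) * ((a42 ^ 3)⁻¹ * c42 * a42 ^ 3)⁻¹ *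
      ((a42 ^ 4)⁻¹ * c42 * a42 ^ 4)⁻¹ ≠ 1 ∧
    ∀ (H : Type) (_ : Group H) (f : G42 →* H), Function.Injective f →
      derivedSeries H 2 = ⊥ →
      ¬ ∃ x : H, x * ((f a42)⁻¹ * x * f a42)⁻¹ * ((f a42 ^ 2)⁻¹ * x * f a42 ^ 2) = f c42 := by
  refine ⟨a42_pow_six, a42_pow_six ▸ one_mem _, c42_mem_commutator, c42_relation_ne_one, ?_⟩
  rintro H _ f hf hH ⟨x, hx⟩
  have hfa : f a42 ^ 6 = 1 := by rw [← map_pow, a42_pow_six, map_one]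
  have hfc : f c42 ∈ commutator H :=
    map_derivedSeries_le_derivedSeries f 1 (mem_map_of_mem f c42_mem_commutator)
  refine c42_relation_ne_one (hf ?_)
  simpa using mul_conj_mul_inv_conj_mul_inv_conj_eq_one hH hfa hfc hx
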